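/- arXiv:2210.11500 — 2 statements merged into one kernel-verified Lean document; each statement's English description precedes it below -/
import Mathlib

section
/- Let E be a real inner product space. For each ordered pair (i,j) of distinct indices in {1,2,3,4}, let ν(i,j) ∈ E be a unit vector with ν(i,j) = ν(j,i), let s(i,j) ∈ {-1,1}, and let f(i,j) ∈ ℝ with f(i,j) = f(j,i). Assume: (a) for each k, Σ_{i ≠ k} s(i,k)·ν(i,k) = 0; (b) ⟪ν(i,j), ν(k,l)⟫ = 0 whenever {i,j} and {k,l} are disjoint; (c) for each k, the compatibility condition Σ_{i ≠ k} s(i,k)·f(i,k) = 0 holds. Then the vector V := (1/2)·Σ_{1 ≤ i < j ≤ 4} f(i,j)·ν(i,j) satisfies ⟪V, ν(k,l)⟫ = f(k,l) for every pair of distinct indices k, l. -/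
/-!
Along each edge `L^m` the three signed normals `s i m • ν i m` are unit vectors summing to
zero, hence pairwise at angle `2π/3`; with the compatibility condition this gives
`⟪∑_{i ≠ m} f i m • ν i m, ν n m⟫ = 3/2 * f n m`. Twice `V` is the sum of these edge vectors
for `m = k` and `m = l`, minus the doubly counted `f k l • ν k l`, plus the term of the pair
disjoint from `{k, l}`, which is orthogonal to `ν k l`; so `⟪2 V, ν k l⟫ = (3/2 + 3/2 - 1) f k l`.
-/

open scoped RealInnerProductSpace
open Finset

section Geometry

variable {E : Type*} [NormedAddCommGroup E] [InnerProductSpace ℝ E]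

theorem inner_eq_neg_half_of_add_add_eq_zero {a b c : E} (ha : ‖a‖ = 1) (hb : ‖b‖ = 1)
    (hc : ‖c‖ = 1) (habc : a + b + c = 0) : ⟪a, b⟫ = -1 / 2 := by
  have h := norm_add_sq_real a b
  rw [eq_neg_of_add_eq_zero_left habc, norm_neg, ha, hb, hc] at h
  linarith

theorem norm_smul_eq_one_of_sign {ε : ℝ} {u : E} (hε : ε = 1 ∨ ε = -1) (hu : ‖u‖ = 1) :
    ‖ε • u‖ = 1 := by
  rcases hε with rfl | rfl <;> simp [hu]

theorem inner_eq_neg_half_mul_of_signed_add_add_eq_zero {u₁ u₂ u₃ : E} {ε₁ ε₂ ε₃ : ℝ}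
    (hε₁ : ε₁ = 1 ∨ ε₁ = -1) (hε₂ : ε₂ = 1 ∨ ε₂ = -1) (hε₃ : ε₃ = 1 ∨ ε₃ = -1)
    (hu₁ : ‖u₁‖ = 1) (hu₂ : ‖u₂‖ = 1) (hu₃ : ‖u₃‖ = 1)
    (hu : ε₁ • u₁ + ε₂ • u₂ + ε₃ • u₃ = 0) : ⟪u₁, u₂⟫ = -(ε₁ * ε₂) / 2 := by
  have h := inner_eq_neg_half_of_add_add_eq_zero (norm_smul_eq_one_of_sign hε₁ hu₁)
    (norm_smul_eq_one_of_sign hε₂ hu₂) (norm_smul_eq_one_of_sign hε₃ hu₃) hu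
  rw [real_inner_smul_left, real_inner_smul_right] at h
  linear_combination (ε₁ * ε₂) * h - ⟪u₁, u₂⟫ * mul_self_eq_one_iff.mpr hε₁
    - ⟪u₁, u₂⟫ * ε₁ * ε₁ * mul_self_eq_one_iff.mpr hε₂

theorem inner_smul_add_smul_add_smul_eq_three_halves_mul {u₁ u₂ u₃ : E} {ε₁ ε₂ ε₃ g₁ g₂ g₃ : ℝ}
    (hε₁ : ε₁ = 1 ∨ ε₁ = -1) (hε₂ : ε₂ = 1 ∨ ε₂ = -1) (hε₃ : ε₃ = 1 ∨ ε₃ = -1)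
    (hu₁ : ‖u₁‖ = 1) (hu₂ : ‖u₂‖ = 1) (hu₃ : ‖u₃‖ = 1)
    (hu : ε₁ • u₁ + ε₂ • u₂ + ε₃ • u₃ = 0) (hg : ε₁ * g₁ + ε₂ * g₂ + ε₃ * g₃ = 0) :
    ⟪g₁ • u₁ + g₂ • u₂ + g₃ • u₃, u₁⟫ = 3 / 2 * g₁ := by
  have h₂₁ := inner_eq_neg_half_mul_of_signed_add_add_eq_zero hε₂ hε₁ hε₃ hu₂ hu₁ hu₃
    (by rw [← hu]; abel)
  have h₃₁ := inner_eq_neg_half_mul_of_signed_add_add_eq_zero hε₃ hε₁ hε₂ hu₃ hu₁ hu₂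
    (by rw [← hu]; abel)
  simp only [inner_add_left, real_inner_smul_left]
  rw [real_inner_self_eq_norm_sq, hu₁, h₂₁, h₃₁]
  linear_combination (-ε₁ / 2) * hg + (g₁ / 2) * mul_self_eq_one_iff.mpr hε₁

end Geometry

theorem two_nsmul_sum_Ioi_eq_sum_erase {ι M : Type*} [LinearOrder ι] [Fintype ι]
    [LocallyFiniteOrderTop ι] [LocallyFiniteOrderBot ι] [AddCommMonoid M]
    (G : ι → ι → M) (hG : ∀ i j, G i j = G j i) :
    2 • ∑ i, ∑ j ∈ Ioi i, G i j = ∑ i, ∑ j ∈ univ.erase i, G i j := by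
  have hlt : ∑ i, ∑ j ∈ Iio i, G i j = ∑ i, ∑ j ∈ Ioi i, G i j := by
    rw [sum_comm' (t' := univ) (s' := Ioi) (by simp)]
    simp_rw [hG]
  simp_rw [← compl_singleton, ← Ioi_disjUnion_Iio, sum_disjUnion, sum_add_distrib, hlt,
    two_nsmul]

namespace Fin

theorem exists_nodup_four {k l : Fin 4} (h : k ≠ l) : ∃ a b : Fin 4, [k, l, a, b].Nodup := by
  revert k l; decide

theorem sum_univ_eq_of_nodup {M : Type*} [AddCommMonoid M] {k l a b : Fin 4}
    (h : [k, l, a, b].Nodup) (φ : Fin 4 → M) : ∑ i, φ i = φ k + φ l + φ a + φ b := by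
  have hU : [k, l, a, b].toFinset = univ :=
    eq_univ_of_card _ (by rw [List.toFinset_card_of_nodup h]; rfl)
  rw [← hU, List.sum_toFinset φ h]
  simp [add_assoc]

theorem sum_erase_eq_of_nodup {M : Type*} [AddCommGroup M] {k l a b : Fin 4}
    (h : [k, l, a, b].Nodup) (φ : Fin 4 → M) : ∑ i ∈ univ.erase k, φ i = φ l + φ a + φ b := by
  rw [sum_erase_eq_sub (mem_univ k), sum_univ_eq_of_nodup h]
  abel

theorem sum_Ioi_eq_of_nodup {k l a b : Fin 4} (h : [k, l, a, b].Nodup)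
    (G : Fin 4 → Fin 4 → ℝ) (hG : ∀ i j, G i j = G j i) :
    ∑ i, ∑ j ∈ Ioi i, G i j = G k l + G k a + G k b + G a l + G b l + G a b := by
  have h2 := two_nsmul_sum_Ioi_eq_sum_erase G hG
  conv_rhs at h2 => simp only [sum_erase_eq_sub (mem_univ _), sum_univ_eq_of_nodup h]
  rw [two_nsmul, hG l k, hG a k, hG b k, hG l a, hG l b, hG b a] at h2
  linear_combination h2 / 2

theorem inner_sum_erase_smul_eq_three_halves_mul {E : Type*} [NormedAddCommGroup E]
    [InnerProductSpace ℝ E] {ν : Fin 4 → Fin 4 → E} {s f : Fin 4 → Fin 4 → ℝ} {m n : Fin 4}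
    (hmn : m ≠ n) (hν : ∀ i, i ≠ m → ‖ν i m‖ = 1) (hs : ∀ i, s i m = 1 ∨ s i m = -1)
    (ha : ∑ i ∈ univ.erase m, s i m • ν i m = 0) (hc : ∑ i ∈ univ.erase m, s i m * f i m = 0) :
    ⟪∑ i ∈ univ.erase m, f i m • ν i m, ν n m⟫ = 3 / 2 * f n m := by
  obtain ⟨a, b, h⟩ := exists_nodup_four hmn
  have hm : m ∉ [n, a, b] := (List.nodup_cons.mp h).1
  have hunit : ∀ i ∈ [n, a, b], ‖ν i m‖ = 1 := fun i hi ↦ hν i (by rintro rfl; exact hm hi)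
  rw [sum_erase_eq_of_nodup h] at ha hc ⊢
  exact inner_smul_add_smul_add_smul_eq_three_halves_mul (hs n) (hs a) (hs b)
    (hunit n (by simp)) (hunit a (by simp)) (hunit b (by simp)) ha hc

end Fin

/-- Pointwise construction at a T-type singular point: six sheets indexed by unordered
pairs from `{1,2,3,4}` with unit normals `ν i j = ν j i` and sign functions
`s i j ∈ {±1}` satisfying, along each edge `k`, `∑_{i ≠ k} s i k • ν i k = 0`;
normals of sheets with disjoint index pairs are orthogonal. If the values
`f i j = f j i` satisfy the compatibility condition `∑_{i ≠ k} s i k * f i k = 0` for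
each `k`, then `V = (1/2) ∑_{i < j} f i j • ν i j` satisfies `⟪V, ν k l⟫ = f k l`. -/
theorem t_point_compatible_realization
    {E : Type*} [NormedAddCommGroup E] [InnerProductSpace ℝ E]
    (ν : Fin 4 → Fin 4 → E) (s : Fin 4 → Fin 4 → ℝ) (f : Fin 4 → Fin 4 → ℝ)
    (hνsymm : ∀ i j, ν i j = ν j i)
    (hνunit : ∀ i j, i ≠ j → ‖ν i j‖ = 1)
    (hs : ∀ i j, s i j = 1 ∨ s i j = -1)
    (hfsymm : ∀ i j, f i j = f j i)
    (ha : ∀ k, ∑ i ∈ Finset.univ.erase k, s i k • ν i k = 0)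
    (hb : ∀ i j k l : Fin 4, i ≠ j → k ≠ l → i ≠ k → i ≠ l → j ≠ k → j ≠ l →
      ⟪ν i j, ν k l⟫ = 0)
    (hc : ∀ k, ∑ i ∈ Finset.univ.erase k, s i k * f i k = 0) :
    ∀ k l, k ≠ l →
      ⟪(1/2 : ℝ) • ∑ i, ∑ j ∈ Finset.Ioi i, f i j • ν i j, ν k l⟫ = f k l := by
  intro k l hkl
  obtain ⟨a, b, hnd⟩ := Fin.exists_nodup_four hkl
  have hk := Fin.inner_sum_erase_smul_eq_three_halves_mul hkl (fun i hi ↦ hνunit i k hi)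
    (fun i ↦ hs i k) (ha k) (hc k)
  have hl := Fin.inner_sum_erase_smul_eq_three_halves_mul hkl.symm (fun i hi ↦ hνunit i l hi)
    (fun i ↦ hs i l) (ha l) (hc l)
  rw [Fin.sum_erase_eq_of_nodup hnd] at hk
  rw [Fin.sum_erase_eq_of_nodup ((List.Perm.swap l k _).nodup_iff.mp hnd)] at hl
  simp only [inner_add_left, real_inner_smul_left, hνsymm _ k, hfsymm _ k] at hk hl
  have hone : ⟪ν k l, ν k l⟫ = 1 := by rw [real_inner_self_eq_norm_sq, hνunit k l hkl]; norm_num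
  have horth : ⟪ν a b, ν k l⟫ = 0 := by
    simp only [List.nodup_cons, List.mem_cons, List.not_mem_nil, or_false, not_or] at hnd
    obtain ⟨⟨-, hka, hkb⟩, ⟨hla, hlb⟩, hab, -⟩ := hnd
    exact hb a b k l hab hkl (Ne.symm hka) (Ne.symm hla) (Ne.symm hkb) (Ne.symm hlb)
  simp only [real_inner_smul_left, sum_inner]
  rw [Fin.sum_Ioi_eq_of_nodup hnd (fun i j ↦ f i j * ⟪ν i j, ν k l⟫)
    (fun i j ↦ by rw [hfsymm, hνsymm])]
  linear_combination (hk + hl - f k l * hone + f a b * horth) / 2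
end

section
/- Let μ be a Borel measure on ℝ³, let p₀ ∈ ℝ³, and suppose there is a constant C > 0 such that μ(B_r(p₀)) ≤ C·r² for every r > 0 (quadratic area growth). Then for every positive integer n, ∫_{B_{eⁿ}(p₀) \ B₁(p₀)} 1/(n²·‖x - p₀‖²) dμ(x) ≤ C·e²/n. In particular this quantity tends to 0 as n → ∞. -/
/-!
Split the annulus `1 ≤ ‖x - p₀‖ < eⁿ` into the `n` shells `eᵏ ≤ ‖x - p₀‖ < eᵏ⁺¹`. On the `k`-th shell
the integrand `1 / ‖x - p₀‖²` is at most `e⁻²ᵏ` while the growth bound gives the shell measure at most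
`C e²ᵏ⁺²`, so every shell contributes at most `C e²`, independently of `k`. The `n` shells give
`n C e²`, and the factor `1 / n²` turns this into `C e² / n`.
-/

open MeasureTheory Metric Filter Set

section QuadraticGrowth

variable {E : Type*} [SeminormedAddCommGroup E]

theorem ball_exp_diff_ball_one_subset_iUnion (p₀ : E) (n : ℕ) :
    ball p₀ (Real.exp n) \ ball p₀ 1 ⊆
      ⋃ k : Fin n, ball p₀ (Real.exp (k + 1)) \ ball p₀ (Real.exp k) := by
  rintro x ⟨hx_lt, hx_ge⟩
  have hx : ‖x - p₀‖ ∈ Ico (Real.exp (0 : ℕ)) (Real.exp n) := by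
    simp_all [dist_eq_norm]
  obtain ⟨k, hk, hxk⟩ := mem_iUnion₂.1 (Ico_subset_biUnion_Ico n (fun k : ℕ => Real.exp k) hx)
  refine mem_iUnion.2 ⟨⟨k, Finset.mem_range.1 hk⟩, ?_⟩
  simpa [dist_eq_norm] using hxk.symm

variable [MeasurableSpace E] {μ : Measure E} {p₀ : E} {C : ℝ}

theorem setLIntegral_inv_norm_sq_ball_diff_ball_le
    (hμ : ∀ r : ℝ, 0 < r → μ (ball p₀ r) ≤ ENNReal.ofReal (C * r ^ 2))
    {r R : ℝ} (hr : 0 < r) (hR : 0 < R) :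
    ∫⁻ x in ball p₀ R \ ball p₀ r, ENNReal.ofReal (1 / ‖x - p₀‖ ^ 2) ∂μ
      ≤ ENNReal.ofReal (C * (R / r) ^ 2) := by
  calc ∫⁻ x in ball p₀ R \ ball p₀ r, ENNReal.ofReal (1 / ‖x - p₀‖ ^ 2) ∂μ
      ≤ ∫⁻ _ in ball p₀ R \ ball p₀ r, ENNReal.ofReal (1 / r ^ 2) ∂μ := by
        refine setLIntegral_mono measurable_const fun x hx => ENNReal.ofReal_le_ofReal ?_
        have : r ≤ ‖x - p₀‖ := by simpa [dist_eq_norm] using hx.2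
        gcongr
    _ = ENNReal.ofReal (1 / r ^ 2) * μ (ball p₀ R \ ball p₀ r) := setLIntegral_const _ _
    _ ≤ ENNReal.ofReal (1 / r ^ 2) * ENNReal.ofReal (C * R ^ 2) := by
        gcongr
        exact (measure_mono sdiff_subset).trans (hμ R hR)
    _ = ENNReal.ofReal (C * (R / r) ^ 2) := by
        rw [← ENNReal.ofReal_mul (by positivity)]
        congr 1
        field_simp

theorem setLIntegral_inv_norm_sq_ball_exp_diff_ball_one_le
    (hμ : ∀ r : ℝ, 0 < r → μ (ball p₀ r) ≤ ENNReal.ofReal (C * r ^ 2)) (n : ℕ) :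
    ∫⁻ x in ball p₀ (Real.exp n) \ ball p₀ 1, ENNReal.ofReal (1 / ‖x - p₀‖ ^ 2) ∂μ
      ≤ n * ENNReal.ofReal (C * Real.exp 2) := by
  have hshell (k : ℕ) :
      ∫⁻ x in ball p₀ (Real.exp (k + 1)) \ ball p₀ (Real.exp k),
          ENNReal.ofReal (1 / ‖x - p₀‖ ^ 2) ∂μ ≤ ENNReal.ofReal (C * Real.exp 2) := by
    have hratio : Real.exp (k + 1) / Real.exp k = Real.exp 1 := by
      rw [← Real.exp_sub, add_sub_cancel_left]
    simpa [hratio] using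
      setLIntegral_inv_norm_sq_ball_diff_ball_le hμ (Real.exp_pos k) (Real.exp_pos (k + 1))
  calc ∫⁻ x in ball p₀ (Real.exp n) \ ball p₀ 1, ENNReal.ofReal (1 / ‖x - p₀‖ ^ 2) ∂μ
      ≤ ∫⁻ x in ⋃ k : Fin n, ball p₀ (Real.exp (k + 1)) \ ball p₀ (Real.exp k),
          ENNReal.ofReal (1 / ‖x - p₀‖ ^ 2) ∂μ :=
        lintegral_mono_set (ball_exp_diff_ball_one_subset_iUnion p₀ n)
    _ ≤ ∑' k : Fin n, ∫⁻ x in ball p₀ (Real.exp (k + 1)) \ ball p₀ (Real.exp k),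
          ENNReal.ofReal (1 / ‖x - p₀‖ ^ 2) ∂μ :=
        lintegral_iUnion_le _ _
    _ ≤ ∑' _ : Fin n, ENNReal.ofReal (C * Real.exp 2) := ENNReal.tsum_le_tsum fun k => hshell k
    _ = n * ENNReal.ofReal (C * Real.exp 2) := by simp

theorem setLIntegral_log_cutoff_le
    (hμ : ∀ r : ℝ, 0 < r → μ (ball p₀ r) ≤ ENNReal.ofReal (C * r ^ 2)) {n : ℕ} (hn : 0 < n) :
    ∫⁻ x in ball p₀ (Real.exp n) \ ball p₀ 1, ENNReal.ofReal (1 / ((n : ℝ) ^ 2 * ‖x - p₀‖ ^ 2)) ∂μ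
      ≤ ENNReal.ofReal (C * Real.exp 2 / n) := by
  have hsplit (x : E) : ENNReal.ofReal (1 / ((n : ℝ) ^ 2 * ‖x - p₀‖ ^ 2))
      = ENNReal.ofReal (1 / (n : ℝ) ^ 2) * ENNReal.ofReal (1 / ‖x - p₀‖ ^ 2) := by
    rw [← ENNReal.ofReal_mul (by positivity), one_div_mul_one_div]
  calc ∫⁻ x in ball p₀ (Real.exp n) \ ball p₀ 1,
        ENNReal.ofReal (1 / ((n : ℝ) ^ 2 * ‖x - p₀‖ ^ 2)) ∂μ
      = ENNReal.ofReal (1 / (n : ℝ) ^ 2) * ∫⁻ x in ball p₀ (Real.exp n) \ ball p₀ 1,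
          ENNReal.ofReal (1 / ‖x - p₀‖ ^ 2) ∂μ := by
        simp_rw [hsplit]
        exact lintegral_const_mul' _ _ ENNReal.ofReal_ne_top
    _ ≤ ENNReal.ofReal (1 / (n : ℝ) ^ 2) * (n * ENNReal.ofReal (C * Real.exp 2)) := by
        gcongr
        exact setLIntegral_inv_norm_sq_ball_exp_diff_ball_one_le hμ n
    _ = ENNReal.ofReal (C * Real.exp 2 / n) := by
        rw [← ENNReal.ofReal_natCast n, ← mul_assoc, ← ENNReal.ofReal_mul (by positivity),
          ← ENNReal.ofReal_mul (by positivity)]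
        congr 1
        field_simp

end QuadraticGrowth

theorem log_cutoff_estimate_general
    (μ : Measure (EuclideanSpace ℝ (Fin 3)))
    (p₀ : EuclideanSpace ℝ (Fin 3)) (C : ℝ)
    (hμ : ∀ r : ℝ, 0 < r → μ (Metric.ball p₀ r) ≤ ENNReal.ofReal (C * r ^ 2)) :
    (∀ n : ℕ, 0 < n →
      ∫⁻ x in Metric.ball p₀ (Real.exp n) \ Metric.ball p₀ 1,
          ENNReal.ofReal (1 / ((n : ℝ) ^ 2 * ‖x - p₀‖ ^ 2)) ∂μ
        ≤ ENNReal.ofReal (C * Real.exp 2 / n)) ∧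
    Filter.Tendsto
      (fun n : ℕ =>
        ∫⁻ x in Metric.ball p₀ (Real.exp n) \ Metric.ball p₀ 1,
          ENNReal.ofReal (1 / ((n : ℝ) ^ 2 * ‖x - p₀‖ ^ 2)) ∂μ)
      Filter.atTop (nhds 0) := by
  have hbound (n : ℕ) (hn : 0 < n) := setLIntegral_log_cutoff_le hμ hn
  refine ⟨hbound, ?_⟩
  have hlim : Tendsto (fun n : ℕ => ENNReal.ofReal (C * Real.exp 2 / n)) atTop (nhds 0) := by
    simpa using ENNReal.tendsto_ofReal (tendsto_const_div_atTop_nhds_zero_nat (C * Real.exp 2))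
  refine tendsto_of_tendsto_of_tendsto_of_le_of_le' tendsto_const_nhds hlim
    (Eventually.of_forall fun _ => zero_le) ?_
  filter_upwards [eventually_gt_atTop 0] with n hn using hbound n hn

/-- Logarithmic cutoff estimate: if a Borel measure `μ` on `ℝ³` has quadratic area
growth `μ(B_r(p₀)) ≤ C r²`, then for every positive integer `n`,
`∫_{B_{eⁿ}(p₀) \ B₁(p₀)} 1/(n² ‖x - p₀‖²) dμ ≤ C e² / n`; in particular this
quantity tends to `0` as `n → ∞`. -/
theorem log_cutoff_estimate
    (μ : Measure (EuclideanSpace ℝ (Fin 3)))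
    (p₀ : EuclideanSpace ℝ (Fin 3)) (C : ℝ) (hC : 0 < C)
    (hμ : ∀ r : ℝ, 0 < r → μ (Metric.ball p₀ r) ≤ ENNReal.ofReal (C * r ^ 2)) :
    (∀ n : ℕ, 0 < n →
      ∫⁻ x in Metric.ball p₀ (Real.exp n) \ Metric.ball p₀ 1,
          ENNReal.ofReal (1 / ((n : ℝ) ^ 2 * ‖x - p₀‖ ^ 2)) ∂μ
        ≤ ENNReal.ofReal (C * Real.exp 2 / n)) ∧
    Filter.Tendsto
      (fun n : ℕ =>
        ∫⁻ x in Metric.ball p₀ (Real.exp n) \ Metric.ball p₀ 1,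
          ENNReal.ofReal (1 / ((n : ℝ) ^ 2 * ‖x - p₀‖ ^ 2)) ∂μ)
      Filter.atTop (nhds 0) :=
  log_cutoff_estimate_general μ p₀ C hμ
end
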